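/- Let p be a prime number, r ≥ 1 an integer, and M a Noetherian (t−1)-invertible Λ-module. Then the derived Alexander module A_{p^r}(M) = M/(t^{p^r} − 1)M is finite. -/

import Mathlib

/-!
Let `n = p ^ r` and `A = M/(t^n - 1)M`. Since `t^n` acts trivially, `A` is a finitely generated
module over `ℤ[t,t⁻¹]/(t^n - 1)`, a ring generated over `ℤ` by units of finite order and hence
finite over `ℤ`; so `A` is a finitely generated abelian group. Modulo `p`, `(t - 1)^n ≡ t^n - 1`,
which kills `A`; since `t - 1` is surjective on `A`, this gives `A = pA`. By Nakayama some integer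
`≡ 1 (mod p)` annihilates `A`, so `A` is a finitely generated torsion group, i.e. finite.
-/

open Polynomial

/-- `Λ` is the ring `ℤ[t,t⁻¹]` of Laurent polynomials with integer coefficients. -/
abbrev Λ : Type := LaurentPolynomial ℤ

/-- `tL` is the element `t` of `Λ = ℤ[t,t⁻¹]`. -/
noncomputable def tL : Λ := LaurentPolynomial.T 1

/-- The submodule `(t^n − 1)M` of a `Λ`-module `M`. -/
noncomputable def derivedSub (M : Type) [AddCommGroup M] [Module Λ M] (n : ℕ) :
    Submodule Λ M :=
  LinearMap.range ((tL ^ n - 1) • (LinearMap.id : M →ₗ[Λ] M))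

open LaurentPolynomial

section LaurentQuotient

variable {R : Type*} [CommRing R]

theorem LaurentPolynomial.mk_T_periodic (n : ℕ) :
    Function.Periodic
      (fun m : ℤ ↦ Ideal.Quotient.mk (Ideal.span {(T n - 1 : R[T;T⁻¹])}) (T m)) n := by
  intro m
  have h : Ideal.Quotient.mk (Ideal.span {(T n - 1 : R[T;T⁻¹])}) (T n) = 1 := by
    rw [← map_one (Ideal.Quotient.mk _), Ideal.Quotient.eq]
    exact Ideal.mem_span_singleton_self _
  simp only [T_add, map_mul, h, mul_one]

theorem LaurentPolynomial.isIntegral_quotient_T_sub_one {n : ℕ} (hn : n ≠ 0) :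
    Algebra.IsIntegral R (R[T;T⁻¹] ⧸ Ideal.span {(T n - 1 : R[T;T⁻¹])}) := by
  have hT (m : ℤ) :
      IsIntegral R (Ideal.Quotient.mk (Ideal.span {(T n - 1 : R[T;T⁻¹])}) (T m)) := by
    refine IsIntegral.of_pow (Nat.pos_of_ne_zero hn) ?_
    have hper := (mk_T_periodic (R := R) n).int_mul_eq m
    simp only [Int.cast_id, T_zero, map_one] at hper
    rw [← map_pow, T_pow, mul_comm, hper]
    exact isIntegral_one
  refine ⟨Ideal.Quotient.mk_surjective.forall.mpr fun f ↦ ?_⟩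
  induction f using LaurentPolynomial.induction_on' with
  | add f g hf hg => rw [map_add]; exact hf.add hg
  | C_mul_T m a =>
    rw [map_mul, C_eq_algebraMap, Ideal.Quotient.mk_algebraMap]
    exact isIntegral_algebraMap.mul (hT m)

theorem LaurentPolynomial.finite_quotient_T_sub_one {n : ℕ} (hn : n ≠ 0) :
    Module.Finite R (R[T;T⁻¹] ⧸ Ideal.span {(T n - 1 : R[T;T⁻¹])}) :=
  have := isIntegral_quotient_T_sub_one (R := R) hn
  Algebra.IsIntegral.finite

end LaurentQuotient

theorem exists_sub_one_pow_prime_pow_eq {R : Type*} [CommRing R] {p : ℕ} (hp : p.Prime)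
    (x : R) (r : ℕ) : ∃ c, (x - 1) ^ p ^ r = x ^ p ^ r - 1 + p * c := by
  obtain ⟨c, hc⟩ := exists_add_pow_prime_pow_eq hp (x - 1) 1 r
  rw [sub_add_cancel, one_pow] at hc
  exact ⟨-((x - 1) * c), by linear_combination -hc⟩

theorem Submodule.Quotient.smul_surjective {R M : Type*} [Ring R] [AddCommGroup M] [Module R M]
    (N : Submodule R M) {x : R} (h : Function.Surjective (x • · : M → M)) :
    Function.Surjective (x • · : M ⧸ N → M ⧸ N) :=
  Function.Surjective.of_comp (g := N.mkQ) (N.mkQ_surjective.comp h)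

theorem natCast_smul_surjective_of_sub_one_smul_surjective {R A : Type*} [CommRing R]
    [AddCommGroup A] [Module R A] {p : ℕ} (hp : p.Prime) {x : R} (r : ℕ)
    (htors : Module.IsTorsionBy R A (x ^ p ^ r - 1))
    (hsurj : Function.Surjective ((x - 1) • · : A → A)) :
    Function.Surjective ((p : R) • · : A → A) := by
  intro a
  obtain ⟨c, hc⟩ := exists_sub_one_pow_prime_pow_eq hp x r
  obtain ⟨b, rfl⟩ := (smul_iterate (α := A) (x - 1) (p ^ r) ▸ hsurj.iterate (p ^ r)) a
  refine ⟨c • b, ?_⟩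
  simp only [hc, add_smul, htors, zero_add, mul_smul]

theorem Module.finite_of_fg_of_smul_surjective {A : Type*} [AddCommGroup A] [Module.Finite ℤ A]
    {p : ℤ} (hp : ¬IsUnit p) (hsurj : Function.Surjective (p • · : A → A)) : Finite A := by
  have hle : (⊤ : Submodule ℤ A) ≤ Ideal.span {p} • ⊤ := fun a _ ↦ by
    obtain ⟨b, rfl⟩ := hsurj a
    exact Submodule.smul_mem_smul (Ideal.mem_span_singleton_self p) trivial
  obtain ⟨t, ht1, ht0⟩ := Submodule.exists_sub_one_mem_and_smul_eq_zero_of_fg_of_le_smul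
    _ _ Module.Finite.fg_top hle
  have ht : t ≠ 0 := by
    rintro rfl
    rw [zero_sub, Ideal.mem_span_singleton, dvd_neg] at ht1
    exact hp (isUnit_of_dvd_one ht1)
  exact Module.finite_of_fg_torsion A fun a ↦
    ⟨⟨t, mem_nonZeroDivisors_of_ne_zero ht⟩, ht0 a trivial⟩

theorem tL_pow (n : ℕ) : tL ^ n = T n := by
  rw [tL, T_pow, mul_one]

theorem derivedSub_eq_ideal_smul_top (M : Type) [AddCommGroup M] [Module Λ M] (n : ℕ) :
    derivedSub M n = Ideal.span {tL ^ n - 1} • (⊤ : Submodule Λ M) := by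
  ext m
  rw [Submodule.ideal_span_singleton_smul, Submodule.mem_smul_pointwise_iff_exists]
  simp [derivedSub]

theorem derived_alexander_prime_power_finite_general (M : Type) [AddCommGroup M] [Module Λ M]
    [IsNoetherian Λ M]
    (hM : Function.Bijective (fun v : M => (tL - 1) • v))
    (p r : ℕ) (hp : p.Prime) :
    Finite (M ⧸ derivedSub M (p ^ r)) := by
  set I : Ideal Λ := Ideal.span {tL ^ p ^ r - 1} with hI
  rw [derivedSub_eq_ideal_smul_top]
  have : Module.Finite ℤ (Λ ⧸ I) := by
    rw [hI, tL_pow]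
    exact finite_quotient_T_sub_one (pow_ne_zero r hp.ne_zero)
  have : Module.Finite ℤ (M ⧸ I • (⊤ : Submodule Λ M)) := Module.Finite.trans (Λ ⧸ I) _
  have htors : Module.IsTorsionBy Λ (M ⧸ I • (⊤ : Submodule Λ M)) (tL ^ p ^ r - 1) :=
    (Module.isTorsionBySet_span_singleton_iff _).mp (Module.isTorsionBySet_quotient_ideal_smul M I)
  refine Module.finite_of_fg_of_smul_surjective (Nat.prime_iff_prime_int.mp hp).not_isUnit ?_
  simpa only [Nat.cast_smul_eq_nsmul, natCast_zsmul] using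
    natCast_smul_surjective_of_sub_one_smul_surjective hp r htors
      (Submodule.Quotient.smul_surjective _ hM.surjective)

/-- For a prime `p` and `r ≥ 1`, the derived Alexander module `A_{p^r}(M) = M/(t^{p^r} − 1)M`
of a Noetherian (t−1)-invertible Λ-module `M` is finite. -/
theorem derived_alexander_prime_power_finite (M : Type) [AddCommGroup M] [Module Λ M]
    [IsNoetherian Λ M]
    (hM : Function.Bijective (fun v : M => (tL - 1) • v))
    (p r : ℕ) (hp : p.Prime) (hr : 1 ≤ r) :
    Finite (M ⧸ derivedSub M (p ^ r)) :=
  derived_alexander_prime_power_finite_general M hM p r hp
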